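/- arXiv:2005.01067 — 3 statements merged into one kernel-verified Lean document; each statement's English description precedes it below -/
import Mathlib

section
/- Let s, n, N be positive integers with n ≥ 2 and s·n even. Then for every j ∈ {0,1,...,N−1}, M_{s,n,N}(j) = (2(2i)^{sn}/N) · Σ_{r=1}^{⌊N/2⌋} cos(πr(2j − N_{s,n})/N) · ∏_{a=1}^{n} sin^s(πar/N), where i is the imaginary unit and N_{s,n} = s·n(n+1)/2. -/
/-- `T s n` is the polynomial `∏_{j=1}^{n} (1 - q^j)^s`. -/
noncomputable def T (s n : ℕ) : Polynomial ℤ :=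
  ∏ j ∈ Finset.Icc 1 n, (1 - Polynomial.X ^ j) ^ s

/-- `Nsn s n = s·n(n+1)/2`, the degree of `T s n`. -/
def Nsn (s n : ℕ) : ℕ := s * n * (n + 1) / 2

/-- `M s n N j = Σ_{0 ≤ i ≤ N_{s,n}, i ≡ j (mod N)} t_{i,s,n}`. -/
noncomputable def M (s n N j : ℕ) : ℤ :=
  ∑ i ∈ (Finset.range (Nsn s n + 1)).filter (fun i => i % N = j), (T s n).coeff i

/-!
Roots-of-unity filter: with `ζ = exp (2πi/N)`, `N · M s n N j = ∑_{r<N} ζ^{-jr} T(ζ^r)`.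
Since `1 - e^{2iθ} = -2i sin θ e^{iθ}`, at `θ = πr/N` the summand is
`(-2i)^{sn} e^{-iθ(2j - N_{s,n})} ∏_a sin^s(aθ)`. The term `r = 0` vanishes because `T(1) = 0`,
and for even `N` the term `r = N/2` vanishes because the factor `(1 - q^2)^s` kills `T(-1)`.
As `T` has integer coefficients and `ζ^{N-r} = conj ζ^r`, the terms `r` and `N - r` are
conjugate, and since `sn` is even their sum is `2(2i)^{sn} cos(θ(2j - N_{s,n})) ∏_a sin^s(aθ)`.
-/

open Finset Polynomial

theorem sum_range_pow_of_pow_eq_one {K : Type*} [Field K] [DecidableEq K] {ω : K} {N : ℕ}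
    (hω : ω ^ N = 1) :
    ∑ r ∈ range N, ω ^ r = if ω = 1 then (N : K) else 0 := by
  split_ifs with h
  · simp [h]
  · rw [geom_sum_eq h, hω, sub_self, zero_div]

theorem IsPrimitiveRoot.sum_aeval_pow_div_pow {R K : Type*} [CommRing R] [Field K] [Algebra R K]
    {ζ : K} {N : ℕ} (hζ : IsPrimitiveRoot ζ N) {p : R[X]} {D : ℕ} (hD : p.natDegree < D)
    {j : ℕ} (hj : j < N) :
    ∑ r ∈ range N, aeval (ζ ^ r) p / (ζ ^ r) ^ j =
      N * algebraMap R K (∑ i ∈ (range D).filter (· % N = j), p.coeff i) := by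
  classical
  have hζ0 : ζ ≠ 0 := hζ.ne_zero (by omega)
  have hroot : ∀ i, (ζ ^ i / ζ ^ j) ^ N = 1 := fun i => by
    rw [div_pow, ← pow_mul, ← pow_mul, mul_comm i, mul_comm j, pow_mul, pow_mul, hζ.pow_eq_one,
      one_pow, one_pow, div_one]
  have hone : ∀ i, ζ ^ i / ζ ^ j = 1 ↔ i % N = j := fun i => by
    rw [div_eq_one_iff_eq (pow_ne_zero _ hζ0), (hζ.isOfFinOrder (by omega)).pow_inj_mod,
      ← hζ.eq_orderOf, Nat.mod_eq_of_lt hj]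
  calc ∑ r ∈ range N, aeval (ζ ^ r) p / (ζ ^ r) ^ j
      = ∑ i ∈ range D, algebraMap R K (p.coeff i) * ∑ r ∈ range N, (ζ ^ i / ζ ^ j) ^ r := by
        simp_rw [aeval_eq_sum_range' hD, Finset.sum_div, Finset.mul_sum]
        rw [Finset.sum_comm]
        refine Finset.sum_congr rfl fun i _ => Finset.sum_congr rfl fun r _ => ?_
        rw [Algebra.smul_def, mul_div_assoc, div_pow, ← pow_mul, ← pow_mul, ← pow_mul, ← pow_mul,
          mul_comm r, mul_comm r]
    _ = N * algebraMap R K (∑ i ∈ (range D).filter (· % N = j), p.coeff i) := by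
        simp_rw [sum_range_pow_of_pow_eq_one (hroot _), hone, map_sum, Finset.sum_filter,
          Finset.mul_sum]
        refine Finset.sum_congr rfl fun i _ => ?_
        split_ifs <;> simp [mul_comm]

theorem Finset.sum_range_eq_sum_Icc_add_reflect {M : Type*} [AddCommMonoid M] (f : ℕ → M) (N : ℕ)
    (h0 : f 0 = 0) (hhalf : ∀ r, 2 * r = N → f r = 0) :
    ∑ r ∈ range N, f r = ∑ r ∈ Icc 1 (N / 2), (f r + f (N - r)) := by
  rcases Nat.eq_zero_or_pos N with rfl | hN
  · simp
  have hupper : ∑ r ∈ Ico (N / 2 + 1) N, f r = ∑ r ∈ Icc 1 (N / 2), f (N - r) := by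
    have hreflect : ∑ r ∈ Ico (N / 2 + 1) N, f r = ∑ r ∈ Icc 1 (N - 1 - N / 2), f (N - r) :=
      sum_nbij' (fun r => N - r) (fun r => N - r)
        (fun r hr => by simp only [mem_Ico, mem_Icc] at hr ⊢; omega)
        (fun r hr => by simp only [mem_Ico, mem_Icc] at hr ⊢; omega)
        (fun r hr => by simp only [mem_Ico] at hr; omega)
        (fun r hr => by simp only [mem_Icc] at hr; omega)
        (fun r hr => by simp only [mem_Ico] at hr; rw [Nat.sub_sub_self hr.2.le])
    rw [hreflect]
    refine sum_subset (fun r hr => by simp only [mem_Icc] at hr ⊢; omega) fun r hr hr' => ?_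
    simp only [mem_Icc, not_and, not_le] at hr hr'
    exact hhalf _ (by omega)
  rw [Finset.sum_add_distrib, ← hupper, Finset.range_eq_Ico,
    ← Finset.sum_Ico_consecutive f (Nat.zero_le (N / 2 + 1)) (by omega : N / 2 + 1 ≤ N),
    ← Finset.sum_Ico_consecutive f (Nat.zero_le 1) (by omega : 1 ≤ N / 2 + 1)]
  simp [h0, Finset.Ico_add_one_right_eq_Icc]

theorem Complex.conj_pow_of_pow_eq_one {ζ : ℂ} {N r : ℕ} (hζ : ζ ^ N = 1) (hN : N ≠ 0)
    (hr : r ≤ N) : starRingEnd ℂ (ζ ^ r) = ζ ^ (N - r) := by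
  have hnorm : ‖ζ ^ r‖ = 1 := by rw [norm_pow, Complex.norm_eq_one_of_pow_eq_one hζ hN, one_pow]
  rw [← RCLike.inv_eq_conj hnorm, inv_eq_of_mul_eq_one_left]
  rw [← pow_add, Nat.sub_add_cancel hr, hζ]

theorem Polynomial.conj_aeval (p : ℤ[X]) (z : ℂ) :
    starRingEnd ℂ (aeval z p) = aeval (starRingEnd ℂ z) p :=
  (aeval_algHom_apply (starRingEnd ℂ).toIntAlgHom z p).symm

theorem sum_Icc_mul_eq_Nsn (s n : ℕ) : ∑ a ∈ Icc 1 n, s * a = Nsn s n := by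
  have hgauss : (∑ a ∈ Icc 1 n, a) * 2 = n * (n + 1) := by
    induction n with
    | zero => simp
    | succ k ih => rw [Finset.sum_Icc_succ_top (by omega), add_mul, ih]; ring
  rw [Nsn, ← Finset.mul_sum, mul_assoc, ← hgauss, ← mul_assoc, Nat.mul_div_cancel _ two_pos]

theorem natDegree_T_le (s n : ℕ) : (T s n).natDegree ≤ Nsn s n :=
  calc (T s n).natDegree ≤ ∑ a ∈ Icc 1 n, ((1 - X ^ a : ℤ[X]) ^ s).natDegree :=
        natDegree_prod_le _ _
    _ ≤ ∑ a ∈ Icc 1 n, s * a := Finset.sum_le_sum fun a _ =>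
        natDegree_pow_le.trans (Nat.mul_le_mul_left s ((natDegree_sub_le _ _).trans (by simp)))
    _ = Nsn s n := sum_Icc_mul_eq_Nsn s n

theorem aeval_T (s n : ℕ) {R : Type*} [CommRing R] (x : R) :
    aeval x (T s n) = ∏ a ∈ Icc 1 n, (1 - x ^ a) ^ s := by
  simp [T, map_prod]

theorem aeval_T_eq_zero {s n a : ℕ} (hs : 0 < s) (ha : a ∈ Icc 1 n) {R : Type*} [CommRing R]
    {x : R} (hx : x ^ a = 1) : aeval x (T s n) = 0 := by
  rw [aeval_T]
  exact Finset.prod_eq_zero ha (by rw [hx, sub_self, zero_pow hs.ne'])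

open Complex in
theorem Complex.one_sub_exp_two_mul_I (z : ℂ) :
    1 - exp (2 * z * I) = -2 * I * sin z * exp (z * I) := by
  have hinv : exp (-z * I) * exp (z * I) = 1 := by rw [← exp_add]; ring_nf; exact exp_zero
  have hsq : exp (z * I) * exp (z * I) = exp (2 * z * I) := by rw [← exp_add]; ring_nf
  rw [sin]
  linear_combination -hinv + hsq + (exp (-z * I) - exp (z * I)) * exp (z * I) * I_sq

open Complex in
theorem aeval_exp_two_mul_I_T (s n : ℕ) (z : ℂ) :
    aeval (exp (2 * z * I)) (T s n) =
      (-2 * I) ^ (s * n) * exp (Nsn s n * z * I) * ∏ a ∈ Icc 1 n, sin (a * z) ^ s := by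
  have hfactor : ∀ a ∈ Icc 1 n, (1 - exp (2 * z * I) ^ a) ^ s =
      (-2 * I) ^ s * exp ((s * a : ℕ) * z * I) * sin (a * z) ^ s := fun a _ => by
    rw [← exp_nat_mul, show (a : ℂ) * (2 * z * I) = 2 * (a * z) * I by ring,
      one_sub_exp_two_mul_I, mul_pow, mul_pow, ← exp_nat_mul]
    push_cast; ring_nf
  rw [aeval_T, Finset.prod_congr rfl hfactor, Finset.prod_mul_distrib, Finset.prod_mul_distrib,
    Finset.prod_const, Nat.card_Icc, Nat.add_sub_cancel, ← pow_mul, ← exp_sum, ← Finset.sum_mul,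
    ← Finset.sum_mul, ← Nat.cast_sum, sum_Icc_mul_eq_Nsn]

noncomputable def twistedT (s n j : ℕ) (w : ℂ) : ℂ := aeval w (T s n) / w ^ j

theorem twistedT_conj (s n j : ℕ) (w : ℂ) :
    twistedT s n j (starRingEnd ℂ w) = starRingEnd ℂ (twistedT s n j w) := by
  rw [twistedT, twistedT, map_div₀, map_pow, Polynomial.conj_aeval]

open Complex in
theorem twistedT_exp_add_conj {s n : ℕ} (hsn : Even (s * n)) (j : ℕ) (θ : ℝ) :
    twistedT s n j (exp (2 * θ * I)) + starRingEnd ℂ (twistedT s n j (exp (2 * θ * I))) =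
      2 * (2 * I) ^ (s * n) * ((Real.cos (θ * (2 * j - Nsn s n)) : ℂ) *
        ∏ a ∈ Icc 1 n, (Real.sin (a * θ) : ℂ) ^ s) := by
  have hsign : (-2 * I) ^ (s * n) = (2 * I) ^ (s * n) := by rw [neg_mul, hsn.neg_pow]
  have hvalue : twistedT s n j (exp (2 * θ * I)) =
      (2 * I) ^ (s * n) * exp (-(θ * (2 * j - Nsn s n) : ℝ) * I) *
        ∏ a ∈ Icc 1 n, (Real.sin (a * θ) : ℂ) ^ s := by
    rw [twistedT, aeval_exp_two_mul_I_T, ← exp_nat_mul, hsign, mul_div_right_comm,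
      mul_div_assoc, ← exp_sub]
    push_cast
    ring_nf
  have hconj : starRingEnd ℂ ((2 * I) ^ (s * n)) = (2 * I) ^ (s * n) := by
    rw [map_pow, map_mul, conj_I, map_ofNat, ← hsign, neg_mul, mul_neg]
  rw [hvalue, map_mul, map_mul, hconj, ← exp_conj, map_prod]
  simp only [map_pow, conj_ofReal, map_mul, map_neg, conj_I]
  rw [neg_mul_neg, ofReal_cos]
  linear_combination -((2 * I) ^ (s * n) * ∏ a ∈ Icc 1 n, (Real.sin (a * θ) : ℂ) ^ s) *
    two_cos ((θ * (2 * j - Nsn s n) : ℝ) : ℂ)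

open Real Complex in
/-- Theorem (main0000, even case): for `s·n` even, `n ≥ 2`, `N ≥ 1` and `0 ≤ j < N`,
`M_{s,n,N}(j) = (2(2i)^{sn}/N) Σ_{r=1}^{⌊N/2⌋} cos(πr(2j - N_{s,n})/N) ∏_{a=1}^{n} sin^s(πar/N)`. -/
theorem stmt2 (s n N : ℕ) (hs : 0 < s) (hn : 2 ≤ n) (hN : 0 < N) (hodd : Even (s * n))
    (j : ℕ) (hj : j < N) :
    (M s n N j : ℂ) =
      (2 * (2 * Complex.I) ^ (s * n) / (N : ℂ)) *
        ∑ r ∈ Finset.Icc 1 (N / 2),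
          ((Real.cos (Real.pi * r * (2 * (j : ℝ) - (Nsn s n : ℝ)) / N) : ℂ) *
            ∏ a ∈ Finset.Icc 1 n, (Real.sin (Real.pi * a * r / N) : ℂ) ^ s) := by
  set ζ := exp (2 * π * I / N)
  have hζ : IsPrimitiveRoot ζ N := isPrimitiveRoot_exp N hN.ne'
  have hfilter : ∑ r ∈ range N, twistedT s n j (ζ ^ r) = N * M s n N j := by
    simpa [M, twistedT] using hζ.sum_aeval_pow_div_pow (Nat.lt_succ_of_le (natDegree_T_le s n)) hj
  have hpair := Finset.sum_range_eq_sum_Icc_add_reflect (fun r => twistedT s n j (ζ ^ r)) N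
    (by rw [pow_zero, twistedT, aeval_T_eq_zero hs (mem_Icc.mpr ⟨le_rfl, by omega⟩) (one_pow 1),
      zero_div])
    (fun r hr => by
      rw [twistedT, aeval_T_eq_zero hs (mem_Icc.mpr ⟨one_le_two, hn⟩)
        (by rw [← pow_mul, mul_comm, hr, hζ.pow_eq_one]), zero_div])
  have hterm : ∀ r ∈ Icc 1 (N / 2), twistedT s n j (ζ ^ r) + twistedT s n j (ζ ^ (N - r)) =
      2 * (2 * I) ^ (s * n) * ((Real.cos (π * r * (2 * j - Nsn s n) / N) : ℂ) *
        ∏ a ∈ Icc 1 n, (Real.sin (π * a * r / N) : ℂ) ^ s) := fun r hr => by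
    have hexp : ζ ^ r = exp (2 * (π * r / N : ℝ) * I) := by
      rw [← Complex.exp_nat_mul]; push_cast; ring_nf
    have hcos : π * r * (2 * j - Nsn s n) / N = (π * r / N) * (2 * j - Nsn s n) := by ring
    have hsin : ∀ a : ℕ, π * a * r / N = a * (π * r / N) := fun a => by ring
    simp_rw [hcos, hsin]
    rw [← conj_pow_of_pow_eq_one hζ.pow_eq_one hN.ne' (by simp at hr; omega), twistedT_conj,
      hexp, twistedT_exp_add_conj hodd]
  rw [Finset.sum_congr rfl hterm, ← Finset.mul_sum] at hpair
  rw [div_mul_eq_mul_div, eq_div_iff (by exact_mod_cast hN.ne'), mul_comm, ← hfilter, hpair]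
end

section
/- Let s and n be positive integers with s·n odd, and let N′ be a positive divisor of N_{s,n} = s·n(n+1)/2. Then Σ_{ℓ=0}^{N_{s,n}/N′} t_{ℓN′, s, n} = 0; that is, the sum of the coefficients of ∏_{j=1}^{n}(1−q^j)^s at exponents that are multiples of N′ vanishes. -/
/-! Each factor `1 - q^j` is antipalindromic of degree `j`, so `T_{s,n}` is palindromic or
antipalindromic of degree `N_{s,n}` according to the parity of `s·n`. In the antipalindromic case
`t_{N_{s,n} - i} = -t_i`, and as `N' ∣ N_{s,n}`, the map `ℓ ↦ N_{s,n}/N' - ℓ` permutes the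
exponents `ℓ N'`; hence the sum equals its own negative. -/

open Finset

namespace Polynomial

variable {R : Type*}

theorem coeff_sub_eq_neg_of_reflect_eq_neg [Ring R] {N i : ℕ} {p : R[X]}
    (hp : reflect N p = -p) (hi : i ≤ N) : p.coeff (N - i) = -p.coeff i := by
  simpa [coeff_reflect, revAt_le hi] using congrArg (coeff · i) hp

theorem sum_coeff_mul_eq_zero_of_reflect_eq_neg [Ring R] [IsAddTorsionFree R] {N d : ℕ}
    {p : R[X]} (hp : reflect N p = -p) (hd : d ∣ N) :
    ∑ l ∈ range (N / d + 1), p.coeff (l * d) = 0 := by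
  have hN : N / d * d = N := Nat.div_mul_cancel hd
  refine self_eq_neg.mp ?_
  calc ∑ l ∈ range (N / d + 1), p.coeff (l * d)
      = ∑ l ∈ range (N / d + 1), p.coeff ((N / d - l) * d) := by
        rw [← sum_range_reflect]
        simp only [Nat.add_sub_cancel]
    _ = ∑ l ∈ range (N / d + 1), -p.coeff (l * d) := by
        refine sum_congr rfl fun l hl => ?_
        have hl : l * d ≤ N := hN ▸ Nat.mul_le_mul_right d (Nat.lt_succ_iff.mp (mem_range.mp hl))
        rw [Nat.sub_mul, hN, coeff_sub_eq_neg_of_reflect_eq_neg hp hl]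
    _ = -∑ l ∈ range (N / d + 1), p.coeff (l * d) := sum_neg_distrib _

theorem reflect_prod [CommSemiring R] {ι : Type*} (s : Finset ι) (f : ι → R[X]) (N : ι → ℕ)
    (hf : ∀ i ∈ s, (f i).natDegree ≤ N i) :
    reflect (∑ i ∈ s, N i) (∏ i ∈ s, f i) = ∏ i ∈ s, reflect (N i) (f i) := by
  classical
  induction s using Finset.induction_on with
  | empty => simp [reflect_one]
  | insert a s ha ih =>
    have hs : ∀ i ∈ s, (f i).natDegree ≤ N i := fun i hi => hf i (mem_insert_of_mem hi)
    rw [sum_insert ha, prod_insert ha, prod_insert ha,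
      reflect_mul _ _ (hf a (mem_insert_self a s)) ((natDegree_prod_le _ _).trans (sum_le_sum hs)),
      ih hs]

theorem reflect_pow [CommSemiring R] {p : R[X]} {N : ℕ} (hp : p.natDegree ≤ N) (s : ℕ) :
    reflect (s * N) (p ^ s) = reflect N p ^ s := by
  simpa using reflect_prod (range s) (fun _ => p) (fun _ => N) fun _ _ => hp

theorem natDegree_one_sub_X_pow_le [Ring R] (j : ℕ) : (1 - X ^ j : R[X]).natDegree ≤ j :=
  (natDegree_sub_le _ _).trans (by simp [natDegree_X_pow_le])

theorem reflect_one_sub_X_pow [Ring R] (j : ℕ) : reflect j (1 - X ^ j : R[X]) = -(1 - X ^ j) := by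
  rw [reflect_sub, reflect_one, reflect_monomial, revAt_le le_rfl, Nat.sub_self, pow_zero,
    neg_sub]

theorem reflect_one_sub_X_pow_pow [CommRing R] (j s : ℕ) :
    reflect (s * j) ((1 - X ^ j : R[X]) ^ s) = (-1) ^ s * (1 - X ^ j) ^ s := by
  rw [reflect_pow (natDegree_one_sub_X_pow_le (R := R) j), reflect_one_sub_X_pow, neg_pow]

end Polynomial

open Polynomial

theorem Nsn_eq_sum (s n : ℕ) : Nsn s n = ∑ j ∈ Icc 1 n, s * j := by
  have hgauss : (∑ j ∈ Icc 1 n, j) * 2 = n * (n + 1) := by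
    rw [← Ico_add_one_right_eq_Icc, sum_Ico_eq_sum_range, ← mul_comm (n + 1)]
    simpa [sum_range_succ', add_comm] using sum_range_id_mul_two (n + 1)
  rw [Nsn, ← mul_sum, mul_assoc, ← hgauss, ← mul_assoc, Nat.mul_div_cancel _ two_pos]

theorem reflect_T (s n : ℕ) : reflect (Nsn s n) (T s n) = (-1) ^ (s * n) * T s n := by
  have hdeg : ∀ j ∈ Icc 1 n, ((1 - X ^ j : ℤ[X]) ^ s).natDegree ≤ s * j := fun j _ =>
    natDegree_pow_le.trans (Nat.mul_le_mul_left s (natDegree_one_sub_X_pow_le j))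
  rw [Nsn_eq_sum, T, reflect_prod _ _ _ hdeg, prod_congr rfl fun j _ => reflect_one_sub_X_pow_pow j s,
    prod_mul_distrib, prod_const, Nat.card_Icc, Nat.add_sub_cancel, ← pow_mul]

theorem stmt4_general (s n N' : ℕ) (hodd : Odd (s * n))
    (hdvd : N' ∣ Nsn s n) :
    ∑ l ∈ Finset.range (Nsn s n / N' + 1), (T s n).coeff (l * N') = 0 :=
  sum_coeff_mul_eq_zero_of_reflect_eq_neg (by rw [reflect_T, hodd.neg_one_pow, neg_one_mul]) hdvd

/-- Theorem (main000, second part): if `s·n` is odd and `N' ∣ N_{s,n}`, then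
`Σ_{ℓ=0}^{N_{s,n}/N'} t_{ℓ N', s, n} = 0`. -/
theorem stmt4 (s n N' : ℕ) (hs : 0 < s) (hn : 0 < n) (hN' : 0 < N') (hodd : Odd (s * n))
    (hdvd : N' ∣ Nsn s n) :
    ∑ l ∈ Finset.range (Nsn s n / N' + 1), (T s n).coeff (l * N') = 0 :=
  stmt4_general s n N' hodd hdvd
end

section
/- For every positive integer n, Σ_{ℓ=0}^{12n} τ_n(ℓ(n+1)) = (n+1)^{23}·φ(n+1), where φ is Euler's totient function; that is, the sum of the coefficients of ∏_{k=1}^{n}(1−q^k)^{24} at exponents divisible by n+1 equals (n+1)^{23}·φ(n+1). -/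
/-!
Roots-of-unity filter: if `ζ` is a primitive `(n+1)`-th root of unity and
`F(q) = ∏_{k=1}^{n} (1 - q^k)^24`, then `∑_{k=0}^{n} F(ζ^k)` is `n + 1` times the sum of the
coefficients of `F` at multiples of `n + 1`; since `deg F = 12n(n+1)`, these are the exponents
`l(n+1)` with `l ≤ 12n`. When `k` is coprime to `n + 1`, `ζ^k` is again primitive and
`∏_{t=1}^{n} (1 - ζ^{kt}) = n + 1`, so `F(ζ^k) = (n+1)^24`; otherwise `ζ^k` has order at most `n`
and one factor of `F(ζ^k)` vanishes. The sum is therefore `φ(n+1) (n+1)^24`.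
-/

noncomputable def tau (n j : ℕ) : ℤ :=
  (∏ k ∈ Finset.Icc 1 n, (1 - Polynomial.X ^ k) ^ 24 : Polynomial ℤ).coeff j

open Finset Polynomial

theorem Finset.sum_range_mul_ite_dvd {M : Type*} [AddCommMonoid M] (f : ℕ → M) {m : ℕ}
    (hm : 0 < m) (N : ℕ) :
    ∑ j ∈ range (N * m), (if m ∣ j then f j else 0) = ∑ l ∈ range N, f (l * m) := by
  induction N with
  | zero => simp
  | succ N ih =>
    rw [add_mul, one_mul, sum_range_add, ih, sum_range_succ,
      sum_eq_single_of_mem 0 (mem_range.2 hm)]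
    · simp
    · intro x hx hx0
      have : ¬m ∣ x := fun h => hx0 (Nat.eq_zero_of_dvd_of_lt h (mem_range.1 hx))
      simp [(Nat.dvd_add_right (dvd_mul_left m N)).not.2 this]

theorem Finset.sum_Icc_id_mul_two (n : ℕ) : (∑ k ∈ Icc 1 n, k) * 2 = n * (n + 1) := by
  have h := sum_range_id_mul_two (n + 1)
  rw [range_eq_Ico, sum_eq_sum_Ico_succ_bot (by omega), Ico_add_one_right_eq_Icc] at h
  simpa [mul_comm] using h

theorem prod_one_sub_pow_Icc_eq_zero_of_not_isPrimitiveRoot {R : Type*} [CommRing R] {ω : R}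
    {n : ℕ} (hω : ω ^ (n + 1) = 1) (hprim : ¬IsPrimitiveRoot ω (n + 1)) :
    ∏ t ∈ Icc 1 n, (1 - ω ^ t) = 0 := by
  have hdvd : orderOf ω ∣ n + 1 := orderOf_dvd_of_pow_eq_one hω
  have hpos : 0 < orderOf ω := Nat.pos_of_dvd_of_pos hdvd n.succ_pos
  have hne : orderOf ω ≠ n + 1 := fun h => hprim (h ▸ IsPrimitiveRoot.orderOf ω)
  have hle : orderOf ω ≤ n := by have := Nat.le_of_dvd n.succ_pos hdvd; omega
  exact prod_eq_zero (mem_Icc.2 ⟨hpos, hle⟩) (by rw [pow_orderOf_eq_one, sub_self])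

theorem Polynomial.natDegree_prod_one_sub_X_pow_pow_le {R : Type*} [CommRing R] (n s : ℕ) :
    2 * (∏ k ∈ Icc 1 n, (1 - X ^ k) ^ s : R[X]).natDegree ≤ s * (n * (n + 1)) := by
  have hfactor : ∀ k, ((1 - X ^ k) ^ s : R[X]).natDegree ≤ s * k := fun k =>
    natDegree_pow_le.trans <| Nat.mul_le_mul_left s <|
      (natDegree_sub_le _ _).trans (by simpa using natDegree_X_pow_le k)
  calc 2 * (∏ k ∈ Icc 1 n, (1 - X ^ k) ^ s : R[X]).natDegree
      ≤ 2 * ∑ k ∈ Icc 1 n, s * k :=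
        Nat.mul_le_mul_left 2 <| (natDegree_prod_le _ _).trans (sum_le_sum fun k _ => hfactor k)
    _ = s * (n * (n + 1)) := by rw [← mul_sum, ← sum_Icc_id_mul_two]; ring

namespace IsPrimitiveRoot

variable {R : Type*} [CommRing R] [IsDomain R] {ζ : R} {m : ℕ}

theorem geom_sum_pow_eq_ite_dvd (hζ : IsPrimitiveRoot ζ m) (j : ℕ) :
    ∑ k ∈ range m, (ζ ^ j) ^ k = if m ∣ j then (m : R) else 0 := by
  split_ifs with h
  · obtain ⟨c, rfl⟩ := h
    simp [pow_mul, hζ.pow_eq_one]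
  · have hne : ζ ^ j - 1 ≠ 0 := sub_ne_zero.2 fun h1 => h ((hζ.pow_eq_one_iff_dvd j).1 h1)
    have := geom_sum_mul (ζ ^ j) m
    rw [pow_right_comm, hζ.pow_eq_one, one_pow, sub_self] at this
    exact (mul_eq_zero.1 this).resolve_right hne

theorem sum_eval_pow_eq_mul_sum_coeff (hζ : IsPrimitiveRoot ζ m) {p : R[X]} {N : ℕ}
    (hp : p.natDegree < N * m) :
    ∑ k ∈ range m, p.eval (ζ ^ k) = m * ∑ l ∈ range N, p.coeff (l * m) := by
  have hm : 0 < m := Nat.pos_of_ne_zero (by rintro rfl; simp at hp)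
  calc ∑ k ∈ range m, p.eval (ζ ^ k)
      = ∑ j ∈ range (N * m), p.coeff j * ∑ k ∈ range m, (ζ ^ j) ^ k := by
        simp_rw [eval_eq_sum_range' hp, mul_sum]
        rw [sum_comm]
        exact sum_congr rfl fun j _ => sum_congr rfl fun k _ => by rw [pow_right_comm]
    _ = ∑ j ∈ range (N * m), (if m ∣ j then m * p.coeff j else 0) := by
        refine sum_congr rfl fun j _ => ?_
        rw [hζ.geom_sum_pow_eq_ite_dvd]
        split_ifs <;> simp [mul_comm]
    _ = m * ∑ l ∈ range N, p.coeff (l * m) := by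
        rw [sum_range_mul_ite_dvd _ hm, mul_sum]

theorem prod_one_sub_pow_Icc_eq {n : ℕ} (hζ : IsPrimitiveRoot ζ (n + 1)) :
    ∏ t ∈ Icc 1 n, (1 - ζ ^ t) = n + 1 := by
  rw [← hζ.prod_one_sub_pow_eq_order, ← Ico_add_one_right_eq_Icc, prod_Ico_eq_prod_range]
  simp [add_comm]

theorem sum_prod_one_sub_pow_pow_Icc {n s : ℕ} (hζ : IsPrimitiveRoot ζ (n + 1)) (hs : s ≠ 0) :
    ∑ k ∈ range (n + 1), (∏ t ∈ Icc 1 n, (1 - (ζ ^ k) ^ t)) ^ s =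
      (n + 1).totient * (n + 1) ^ s := by
  have hterm : ∀ k, (∏ t ∈ Icc 1 n, (1 - (ζ ^ k) ^ t)) ^ s =
      if (n + 1).Coprime k then ((n : R) + 1) ^ s else 0 := by
    intro k
    split_ifs with hk
    · rw [(hζ.pow_of_coprime k hk.symm).prod_one_sub_pow_Icc_eq]
    · have hprim : ¬IsPrimitiveRoot (ζ ^ k) (n + 1) := by
        rwa [hζ.pow_iff_coprime n.succ_pos, Nat.coprime_comm]
      have hω : (ζ ^ k) ^ (n + 1) = 1 := by rw [pow_right_comm, hζ.pow_eq_one, one_pow]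
      rw [prod_one_sub_pow_Icc_eq_zero_of_not_isPrimitiveRoot hω hprim, zero_pow hs]
  rw [sum_congr rfl fun k _ => hterm k, sum_ite, sum_const_zero, add_zero, sum_const,
    nsmul_eq_mul, Nat.totient_eq_card_coprime]

end IsPrimitiveRoot

theorem sum_coeff_mul_prod_one_sub_X_pow_pow (n r N : ℕ) (hN : (r + 1) * n ≤ 2 * N) :
    ∑ l ∈ range (N + 1), (∏ k ∈ Icc 1 n, (1 - X ^ k) ^ (r + 1) : ℤ[X]).coeff (l * (n + 1)) =
      (n + 1 : ℤ) ^ r * (n + 1).totient := by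
  set P : ℤ[X] := ∏ k ∈ Icc 1 n, (1 - X ^ k) ^ (r + 1)
  obtain ⟨ζ, hζ⟩ : ∃ ζ : ℂ, IsPrimitiveRoot ζ (n + 1) :=
    ⟨_, Complex.isPrimitiveRoot_exp (n + 1) n.succ_ne_zero⟩
  have hdeg : (P.map (Int.castRingHom ℂ)).natDegree < (N + 1) * (n + 1) := by
    have := natDegree_prod_one_sub_X_pow_pow_le (R := ℤ) n (r + 1)
    exact natDegree_map_le.trans_lt (by nlinarith)
  have heval : ∀ k, (P.map (Int.castRingHom ℂ)).eval (ζ ^ k) =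
      (∏ t ∈ Icc 1 n, (1 - (ζ ^ k) ^ t)) ^ (r + 1) := by
    simp [P, Polynomial.map_prod, eval_prod, prod_pow]
  have hfilter := hζ.sum_eval_pow_eq_mul_sum_coeff hdeg
  simp only [heval, hζ.sum_prod_one_sub_pow_pow_Icc (s := r + 1) (by omega), coeff_map,
    eq_intCast] at hfilter
  apply Int.cast_injective (α := ℂ)
  apply mul_left_cancel₀ (show ((n + 1 : ℕ) : ℂ) ≠ 0 from Nat.cast_ne_zero.2 n.succ_ne_zero)
  push_cast at hfilter ⊢
  linear_combination -hfilter

theorem stmt11_general (n : ℕ) :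
    ∑ l ∈ Finset.range (12 * n + 1), tau n (l * (n + 1)) =
      (n + 1 : ℤ) ^ 23 * (Nat.totient (n + 1) : ℤ) :=
  sum_coeff_mul_prod_one_sub_X_pow_pow n 23 (12 * n) (by omega)

/-- Corollary: `Σ_{ℓ=0}^{12n} τ_n(ℓ(n+1)) = (n+1)^{23}·φ(n+1)`. -/
theorem stmt11 (n : ℕ) (hn : 0 < n) :
    ∑ l ∈ Finset.range (12 * n + 1), tau n (l * (n + 1)) =
      (n + 1 : ℤ) ^ 23 * (Nat.totient (n + 1) : ℤ) :=
  stmt11_general n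
end
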